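/- arXiv:2003.06641 — 2 statements merged into one kernel-verified Lean document; each statement's English description precedes it below -/
import Mathlib

section
/- Let E be a complex inner product space, let η : E → E be a self-adjoint ℂ-linear map that is positive definite (⟪x, η x⟫ is real and positive for every x ≠ 0), and let Θ : E → E be an additive, conjugate-linear map (Θ(c•x) = conj(c)•Θ(x)) satisfying the pseudo-antiunitarity condition ⟪Θx, η(Θy)⟫ = conj(⟪x, η y⟫) for all x, y ∈ E, and Θ(Θψ) = −ψ for all ψ ∈ E. Then for every ψ ∈ E one has ⟪Θψ, η ψ⟫ = 0, and for every nonzero ψ ∈ E the vectors ψ and Θψ are linearly independent over ℂ. -/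
/-!
Pairing `Θ²ψ = -ψ` with `Θψ` and using pseudo-antiunitarity and the self-adjointness of `η`
shows that the number `a = ⟪Θψ, ηψ⟫` satisfies `a = -a`, so `a = 0`. Hence `Θψ` lies in the
`η`-orthogonal complement of `ψ`, while `ψ` itself does not (as `⟪ψ, ηψ⟫ > 0`); and `Θψ ≠ 0`
because `⟪Θψ, ηΘψ⟫ = conj ⟪ψ, ηψ⟫ ≠ 0`. A nonzero vector orthogonal to `ηψ` cannot be
proportional to `ψ`.
-/

local notation "⟪" x ", " y "⟫" => @inner ℂ _ _ x y

theorem linearIndependent_pair_of_inner_eq_zero {𝕜 E : Type*} [RCLike 𝕜]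
    [NormedAddCommGroup E] [InnerProductSpace 𝕜 E] {x y z : E}
    (hx : inner 𝕜 x z ≠ 0) (hy : y ≠ 0) (hyz : inner 𝕜 y z = 0) :
    LinearIndependent 𝕜 ![x, y] := by
  refine LinearIndependent.pair_iff.mpr fun s t hst => ?_
  have hs : s = 0 := by
    have h := congrArg (fun v => inner 𝕜 v z) hst
    simp only [inner_add_left, inner_smul_left, hyz, mul_zero, add_zero, inner_zero_left,
      mul_eq_zero, map_eq_zero] at h
    exact h.resolve_right hx
  subst hs
  rw [zero_smul, zero_add, smul_eq_zero] at hst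
  exact ⟨rfl, hst.resolve_right hy⟩

theorem inner_apply_map_eq_zero_of_pseudoAntiunitary {E : Type*} [NormedAddCommGroup E]
    [InnerProductSpace ℂ E] {η : E →ₗ[ℂ] E} {Θ : E → E}
    (hsa : ∀ x y : E, ⟪η x, y⟫ = ⟪x, η y⟫)
    (hpau : ∀ x y : E, ⟪Θ x, η (Θ y)⟫ = starRingEnd ℂ ⟪x, η y⟫)
    (hsq : ∀ ψ : E, Θ (Θ ψ) = -ψ) (ψ : E) :
    ⟪Θ ψ, η ψ⟫ = 0 := by
  refine self_eq_neg.mp ?_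
  calc ⟪Θ ψ, η ψ⟫ = -⟪Θ ψ, η (Θ (Θ ψ))⟫ := by rw [hsq, map_neg, inner_neg_right, neg_neg]
    _ = -starRingEnd ℂ ⟪ψ, η (Θ ψ)⟫ := by rw [hpau]
    _ = -⟪η (Θ ψ), ψ⟫ := by rw [inner_conj_symm]
    _ = -⟪Θ ψ, η ψ⟫ := by rw [hsa]

theorem kramers_pseudo_antiunitary_general {E : Type*} [NormedAddCommGroup E]
    [InnerProductSpace ℂ E] (η : E →ₗ[ℂ] E)
    (hsa : ∀ x y : E, ⟪η x, y⟫ = ⟪x, η y⟫)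
    (hpos : ∀ x : E, x ≠ 0 → 0 < (⟪x, η x⟫).re ∧ (⟪x, η x⟫).im = 0)
    (Θ : E → E)
    (hpau : ∀ x y : E, ⟪Θ x, η (Θ y)⟫ = starRingEnd ℂ ⟪x, η y⟫)
    (hsq : ∀ ψ : E, Θ (Θ ψ) = -ψ) :
    (∀ ψ : E, ⟪Θ ψ, η ψ⟫ = 0) ∧
      ∀ ψ : E, ψ ≠ 0 → LinearIndependent ℂ ![ψ, Θ ψ] := by
  have horth := inner_apply_map_eq_zero_of_pseudoAntiunitary hsa hpau hsq
  refine ⟨horth, fun ψ hψ => ?_⟩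
  have hψη : ⟪ψ, η ψ⟫ ≠ 0 := fun h => (hpos ψ hψ).1.ne' (by rw [h, Complex.zero_re])
  have hΘψ : Θ ψ ≠ 0 := by
    intro h
    have hΘψη : ⟪Θ ψ, η (Θ ψ)⟫ ≠ 0 := by rwa [hpau, map_ne_zero]
    simp [h] at hΘψη
  exact linearIndependent_pair_of_inner_eq_zero hψη hΘψ (horth ψ)

/-- Kramers-type theorem for a pseudo-antiunitary operator `Θ` squaring to `-1`
with respect to a self-adjoint positive-definite metric `η`: every `ψ` is
`η`-orthogonal to `Θψ`, and for nonzero `ψ` the pair `ψ, Θψ` is linearly independent. -/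
theorem kramers_pseudo_antiunitary {E : Type*} [NormedAddCommGroup E]
    [InnerProductSpace ℂ E] (η : E →ₗ[ℂ] E)
    (hsa : ∀ x y : E, ⟪η x, y⟫ = ⟪x, η y⟫)
    (hpos : ∀ x : E, x ≠ 0 → 0 < (⟪x, η x⟫).re ∧ (⟪x, η x⟫).im = 0)
    (Θ : E → E)
    (hadd : ∀ x y : E, Θ (x + y) = Θ x + Θ y)
    (hconj : ∀ (c : ℂ) (x : E), Θ (c • x) = (starRingEnd ℂ c) • Θ x)
    (hpau : ∀ x y : E, ⟪Θ x, η (Θ y)⟫ = starRingEnd ℂ ⟪x, η y⟫)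
    (hsq : ∀ ψ : E, Θ (Θ ψ) = -ψ) :
    (∀ ψ : E, ⟪Θ ψ, η ψ⟫ = 0) ∧
      ∀ ψ : E, ψ ≠ 0 → LinearIndependent ℂ ![ψ, Θ ψ] :=
  kramers_pseudo_antiunitary_general η hsa hpos Θ hpau hsq
end

section
/- Define the 3×3 complex matrices S_x = (1/√2)·[[0,1,0],[1,0,1],[0,1,0]], S_y = (1/√2)·[[0,−i,0],[i,0,−i],[0,i,0]], S_z = diag(1,0,−1), S₊ = S_z − i·S_y, S₋ = S_z + i·S_y, h(φ) = e^{iφ}·S₊ + e^{−iφ}·S₋, and the normalized S_x-eigenvectors v₁ = (1/2)·(1, √2, 1), v₀ = (1/√2)·(1, 0, −1), v₋₁ = (1/2)·(1, −√2, 1). Then for all real θ, φ and all s_i, s_f ∈ {−1, 0, 1}, the matrix element ⟪v_{s_f}, exp(−i·(θ/2)·h(φ))·v_{s_i}⟫ equals e^{i(s_f−s_i)φ}·(1/2)^{(s_f² + s_i²)/2}·( i^{|s_f−s_i|}·cos(θ + (π/2)·|s_f−s_i|) + s_i·s_f ), where exp denotes the matrix exponential and ⟪·,·⟫ the standard Hermitian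 inner product on ℂ³, conjugate-linear in the first argument. -/
open Matrix Complex

/-- The spin-1 operator `S_x`. -/
noncomputable def Sx : Matrix (Fin 3) (Fin 3) ℂ :=
  (1 / (Real.sqrt 2 : ℂ)) • !![0, 1, 0; 1, 0, 1; 0, 1, 0]

/-- The spin-1 operator `S_y`. -/
noncomputable def Sy : Matrix (Fin 3) (Fin 3) ℂ :=
  (1 / (Real.sqrt 2 : ℂ)) • !![0, -I, 0; I, 0, -I; 0, I, 0]

/-- The spin-1 operator `S_z`. -/
noncomputable def Sz : Matrix (Fin 3) (Fin 3) ℂ :=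
  !![1, 0, 0; 0, 0, 0; 0, 0, -1]

/-- Spin-1 raising operator `S₊ = S_z − i S_y`. -/
noncomputable def Sp : Matrix (Fin 3) (Fin 3) ℂ := Sz - I • Sy

/-- Spin-1 lowering operator `S₋ = S_z + i S_y`. -/
noncomputable def Sm : Matrix (Fin 3) (Fin 3) ℂ := Sz + I • Sy

/-- The effective spin-1 Hamiltonian `h(φ) = e^{iφ} S₊ + e^{−iφ} S₋`. -/
noncomputable def hMat (φ : ℝ) : Matrix (Fin 3) (Fin 3) ℂ :=
  Complex.exp (I * φ) • Sp + Complex.exp (-I * φ) • Sm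

/-- The normalized eigenvectors `|s⟩` of `S_x` for `s ∈ {-1, 0, 1}`. -/
noncomputable def vv : ℤ → Fin 3 → ℂ
  | 1 => (1 / 2 : ℂ) • ![1, (Real.sqrt 2 : ℂ), 1]
  | 0 => (1 / (Real.sqrt 2 : ℂ)) • ![1, 0, -1]
  | -1 => (1 / 2 : ℂ) • ![1, -(Real.sqrt 2 : ℂ), 1]
  | _ => 0

open NormedSpace

/-! The matrix `sxBasis`, whose rows are the `S_x`-eigenvectors `v_s`, is a real symmetric
involution exchanging `S_x` and `S_z`. Conjugated by it, `h(φ) = 2 (cos φ S_z + sin φ S_y)`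
becomes `e^{iφ S_z} (2 S_x) e^{-iφ S_z}`, and `2 S_x` is in turn the conjugate of `2 S_z`. So the
evolution operator, read in the `S_x`-eigenbasis, is
`e^{iφ S_z} · sxBasis · e^{-iθ S_z} · sxBasis · e^{-iφ S_z}`: the diagonal outer factors produce
the vortex phase `e^{i(s_f - s_i)φ}`, and the entries of the middle factor are the stated
amplitudes. -/

lemma exp_smul_conj {n : Type*} [Fintype n] [DecidableEq n] (U A : Matrix n n ℂ) (hU : IsUnit U)
    (c : ℂ) : exp (c • (U * A * U⁻¹)) = U * exp (c • A) * U⁻¹ := by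
  rw [← Matrix.exp_conj _ _ hU, Matrix.mul_smul, Matrix.smul_mul]

lemma ofReal_sqrt_two_sq : ((Real.sqrt 2 : ℝ) : ℂ) ^ 2 = 2 := by
  norm_cast; exact Real.sq_sqrt zero_le_two

def spin : Fin 3 → ℤ := ![1, 0, -1]

lemma exists_spin_eq {s : ℤ} (hs : s ∈ ({-1, 0, 1} : Set ℤ)) : ∃ i, spin i = s := by
  rcases hs with rfl | rfl | rfl
  exacts [⟨2, rfl⟩, ⟨1, rfl⟩, ⟨0, rfl⟩]

noncomputable def sxBasis : Matrix (Fin 3) (Fin 3) ℂ := Matrix.of fun i => vv (spin i)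

lemma sxBasis_transpose : sxBasisᵀ = sxBasis := by
  have hsqrt := ofReal_sqrt_two_sq
  ext i j
  fin_cases i <;> fin_cases j <;> simp [sxBasis, spin, vv] <;> grind

lemma sxBasis_mul_self : sxBasis * sxBasis = 1 := by
  have hsqrt := ofReal_sqrt_two_sq
  ext i j
  fin_cases i <;> fin_cases j <;>
    simp [sxBasis, spin, vv, Matrix.mul_apply, Fin.sum_univ_three] <;> grind

lemma exp_smul_sxBasis_conj (c : ℂ) (A : Matrix (Fin 3) (Fin 3) ℂ) :
    exp (c • (sxBasis * A * sxBasis)) = sxBasis * exp (c • A) * sxBasis := by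
  have hV : sxBasis⁻¹ = sxBasis := inv_eq_left_inv sxBasis_mul_self
  simpa only [hV] using exp_smul_conj sxBasis A (IsUnit.of_mul_eq_one _ sxBasis_mul_self) c

lemma star_vv_spin (i : Fin 3) : star (vv (spin i)) = vv (spin i) := by
  ext k
  fin_cases i <;> fin_cases k <;> simp [spin, vv, Complex.conj_ofReal]

lemma star_vv_dotProduct_mulVec (A : Matrix (Fin 3) (Fin 3) ℂ) (i j : Fin 3) :
    star (vv (spin i)) ⬝ᵥ (A *ᵥ vv (spin j)) = (sxBasis * A * sxBasis) i j := by
  rw [star_vv_spin]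
  calc vv (spin i) ⬝ᵥ (A *ᵥ vv (spin j)) = (sxBasis * A * sxBasisᵀ) i j := by
        rw [dotProduct_mulVec, Matrix.mul_apply', Matrix.mul_apply_eq_vecMul]; rfl
    _ = _ := by rw [sxBasis_transpose]

lemma Sz_eq_diagonal : Sz = diagonal fun i => (spin i : ℂ) := by
  ext i j
  fin_cases i <;> fin_cases j <;> simp [Sz, spin]

lemma exp_smul_Sz (c : ℂ) : exp (c • Sz) = diagonal fun i => Complex.exp (c * spin i) := by
  rw [Sz_eq_diagonal, ← diagonal_smul, Matrix.exp_diagonal]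
  ext i j
  simp [diagonal_apply, ← Complex.exp_eq_exp_ℂ]

lemma exp_smul_Sz_conj_apply (φ : ℝ) (X : Matrix (Fin 3) (Fin 3) ℂ) (i j : Fin 3) :
    (exp ((I * φ) • Sz) * X * exp (-((I * φ) • Sz))) i j =
      Complex.exp (I * (spin i - spin j) * φ) * X i j := by
  rw [← neg_smul, exp_smul_Sz, exp_smul_Sz, mul_diagonal, diagonal_mul, sub_eq_add_neg,
    mul_add, add_mul, Complex.exp_add]
  ring_nf

lemma sxBasis_conj_Sz : sxBasis * Sz * sxBasis = Sx := by
  have hsqrt := ofReal_sqrt_two_sq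
  ext i j
  fin_cases i <;> fin_cases j <;>
    simp [sxBasis, spin, vv, Sz, Sx, Matrix.mul_apply, Fin.sum_univ_three] <;> grind

lemma sxBasis_conj_hMat (φ : ℝ) :
    sxBasis * hMat φ * sxBasis =
      exp ((I * φ) • Sz) * ((2 : ℂ) • Sx) * exp (-((I * φ) • Sz)) := by
  have hsqrt := ofReal_sqrt_two_sq
  have hI := Complex.I_sq
  rw [← neg_smul, exp_smul_Sz, exp_smul_Sz]
  ext i j
  fin_cases i <;> fin_cases j <;>
    simp [sxBasis, spin, vv, hMat, Sp, Sm, Sz, Sy, Sx, Matrix.mul_apply, Fin.sum_univ_three,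
      diagonal_apply] <;> grind

lemma sxBasis_conj_exp_hMat (c : ℂ) (φ : ℝ) :
    sxBasis * exp (c • hMat φ) * sxBasis =
      exp ((I * φ) • Sz) * (sxBasis * exp ((2 * c) • Sz) * sxBasis) *
        exp (-((I * φ) • Sz)) := by
  have h2Sx : c • ((2 : ℂ) • Sx) = (2 * c) • (sxBasis * Sz * sxBasis) := by
    rw [sxBasis_conj_Sz, smul_smul, mul_comm]
  rw [← exp_smul_sxBasis_conj, sxBasis_conj_hMat, Matrix.exp_neg,
    exp_smul_conj _ _ (Matrix.isUnit_exp _), h2Sx, exp_smul_sxBasis_conj]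

lemma inv_two_rpow_inv_two : (((2⁻¹ : ℝ) ^ (2⁻¹ : ℝ) : ℝ) : ℂ) = (Real.sqrt 2 : ℂ)⁻¹ := by
  rw [← one_div 2, ← Real.sqrt_eq_rpow, one_div, Real.sqrt_inv, Complex.ofReal_inv]

lemma sxBasis_conj_exp_Sz_apply (θ : ℝ) (i j : Fin 3) :
    (sxBasis * exp ((-I * θ) • Sz) * sxBasis) i j =
      (((1 / 2 : ℝ) ^ (((spin i ^ 2 + spin j ^ 2 : ℤ) : ℝ) / 2) : ℝ) : ℂ) *
        (I ^ (spin i - spin j).natAbs *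
            (Real.cos (θ + Real.pi / 2 * ((spin i - spin j).natAbs : ℝ)) : ℂ) +
          ((spin j * spin i : ℤ) : ℂ)) := by
  have hsqrt := ofReal_sqrt_two_sq
  have hI := Complex.I_sq
  have hplus : Complex.exp (I * θ) = Complex.cos θ + Complex.sin θ * I := by
    rw [mul_comm, Complex.exp_mul_I]
  have hminus : Complex.exp (-(I * θ)) = Complex.cos θ - Complex.sin θ * I := by
    rw [show -(I * θ) = (-θ : ℂ) * I by ring, Complex.exp_mul_I, Complex.cos_neg,
      Complex.sin_neg]
    ring
  rw [exp_smul_Sz]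
  fin_cases i <;> fin_cases j <;>
    simp [sxBasis, spin, vv, Matrix.mul_apply, Fin.sum_univ_three, diagonal_apply, hplus, hminus,
      inv_two_rpow_inv_two, Complex.cos_add_pi_div_two] <;> grind

/-- Transition amplitude for spin-1 conical diffraction: the matrix element of the
evolution operator `exp(−i(θ/2)h(φ))` between `S_x`-eigenstates `|s_i⟩` and `|s_f⟩`. -/
theorem conical_diffraction_amplitude (θ φ : ℝ) (si sf : ℤ)
    (hsi : si ∈ ({-1, 0, 1} : Set ℤ)) (hsf : sf ∈ ({-1, 0, 1} : Set ℤ)) :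
    star (vv sf) ⬝ᵥ
        (NormedSpace.exp ((-I * ((θ : ℂ) / 2)) • hMat φ) *ᵥ vv si) =
      Complex.exp (I * ((sf : ℂ) - (si : ℂ)) * φ) *
        (((1 / 2 : ℝ) ^ (((sf ^ 2 + si ^ 2 : ℤ) : ℝ) / 2) : ℝ) : ℂ) *
        (I ^ (sf - si).natAbs *
            (Real.cos (θ + Real.pi / 2 * ((sf - si).natAbs : ℝ)) : ℂ) +
          ((si * sf : ℤ) : ℂ)) := by
  obtain ⟨i, rfl⟩ := exists_spin_eq hsf
  obtain ⟨j, rfl⟩ := exists_spin_eq hsi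
  have hangle : 2 * (-I * ((θ : ℂ) / 2)) = -I * θ := by ring
  rw [star_vv_dotProduct_mulVec, sxBasis_conj_exp_hMat, exp_smul_Sz_conj_apply, hangle,
    sxBasis_conj_exp_Sz_apply]
  exact (mul_assoc _ _ _).symm
end
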